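/- arXiv:2504.07900 — 3 statements merged into one kernel-verified Lean document; each statement's English description precedes it below -/
import Mathlib

section
/- Descartes' Circle Theorem: if four circles in the Euclidean plane are pairwise externally tangent (each pair of the four circles is tangent at a single point, with pairwise distinct tangency points, and the circles have pairwise disjoint interiors) with radii r₁, r₂, r₃, r₄ > 0, then their curvatures kᵢ = 1/rᵢ satisfy (k₁ + k₂ + k₃ + k₄)² = 2(k₁² + k₂² + k₃² + k₄²). -/
/-- **Descartes' Circle Theorem.**
Four circles in the Euclidean plane with centers `c i` and radii `r i > 0` are
pairwise externally tangent when `dist (c i) (c j) = r i + r j` for all `i ≠ j`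
(this forces each pair to touch at a single point, with pairwise distinct
tangency points and pairwise disjoint interiors).  Then the curvatures
`k i = 1 / r i` satisfy `(k₁ + k₂ + k₃ + k₄)² = 2 (k₁² + k₂² + k₃² + k₄²)`. -/
theorem descartes_circle_theorem
    (c : Fin 4 → EuclideanSpace ℝ (Fin 2)) (r : Fin 4 → ℝ)
    (hr : ∀ i, 0 < r i)
    (htangent : ∀ i j, i ≠ j → dist (c i) (c j) = r i + r j) :
    (1 / r 0 + 1 / r 1 + 1 / r 2 + 1 / r 3) ^ 2
      = 2 * ((1 / r 0) ^ 2 + (1 / r 1) ^ 2 + (1 / r 2) ^ 2 + (1 / r 3) ^ 2) := by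
  -- squared distance equations in coordinates
  have hd : ∀ i j, i ≠ j →
      (c i 0 - c j 0) ^ 2 + (c i 1 - c j 1) ^ 2 = (r i + r j) ^ 2 := by
    intro i j hij
    have h := htangent i j hij
    rw [EuclideanSpace.dist_eq] at h
    have hnn : 0 ≤ ∑ k, dist (c i k) (c j k) ^ 2 :=
      Finset.sum_nonneg fun _ _ => sq_nonneg _
    have h2 : (∑ k, dist (c i k) (c j k) ^ 2) = (r i + r j) ^ 2 := by
      rw [← h]; exact (Real.sq_sqrt hnn).symm
    simpa [Fin.sum_univ_two, Real.dist_eq, sq_abs] using h2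
  set a1 : ℝ := c 1 0 - c 0 0 with ha1
  set b1 : ℝ := c 1 1 - c 0 1 with hb1
  set a2 : ℝ := c 2 0 - c 0 0 with ha2
  set b2 : ℝ := c 2 1 - c 0 1 with hb2
  set a3 : ℝ := c 3 0 - c 0 0 with ha3
  set b3 : ℝ := c 3 1 - c 0 1 with hb3
  have e10 := hd 1 0 (by decide)
  have e20 := hd 2 0 (by decide)
  have e30 := hd 3 0 (by decide)
  have e12 := hd 1 2 (by decide)
  have e13 := hd 1 3 (by decide)
  have e23 := hd 2 3 (by decide)
  have h11 : a1 ^ 2 + b1 ^ 2 = (r 0 + r 1) ^ 2 := by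
    rw [ha1, hb1]; linear_combination e10
  have h22 : a2 ^ 2 + b2 ^ 2 = (r 0 + r 2) ^ 2 := by
    rw [ha2, hb2]; linear_combination e20
  have h33 : a3 ^ 2 + b3 ^ 2 = (r 0 + r 3) ^ 2 := by
    rw [ha3, hb3]; linear_combination e30
  have h12 : a1 * a2 + b1 * b2 = r 0 ^ 2 + r 0 * (r 1 + r 2) - r 1 * r 2 := by
    rw [ha1, hb1, ha2, hb2]; linear_combination (e10 + e20 - e12) / 2
  have h13 : a1 * a3 + b1 * b3 = r 0 ^ 2 + r 0 * (r 1 + r 3) - r 1 * r 3 := by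
    rw [ha1, hb1, ha3, hb3]; linear_combination (e10 + e30 - e13) / 2
  have h23 : a2 * a3 + b2 * b3 = r 0 ^ 2 + r 0 * (r 2 + r 3) - r 2 * r 3 := by
    rw [ha2, hb2, ha3, hb3]; linear_combination (e20 + e30 - e23) / 2
  -- Gram determinant of three vectors in the plane vanishes identically
  have hG : (a1 ^ 2 + b1 ^ 2) * ((a2 ^ 2 + b2 ^ 2) * (a3 ^ 2 + b3 ^ 2)
        - (a2 * a3 + b2 * b3) ^ 2)
      - (a1 * a2 + b1 * b2) * ((a1 * a2 + b1 * b2) * (a3 ^ 2 + b3 ^ 2)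
        - (a1 * a3 + b1 * b3) * (a2 * a3 + b2 * b3))
      + (a1 * a3 + b1 * b3) * ((a1 * a2 + b1 * b2) * (a2 * a3 + b2 * b3)
        - (a1 * a3 + b1 * b3) * (a2 ^ 2 + b2 ^ 2)) = 0 := by ring
  rw [h11, h22, h33, h12, h13, h23] at hG
  have hq : (r 1 * r 2 * r 3 + r 0 * r 2 * r 3 + r 0 * r 1 * r 3 + r 0 * r 1 * r 2) ^ 2
      = 2 * ((r 1 * r 2 * r 3) ^ 2 + (r 0 * r 2 * r 3) ^ 2
        + (r 0 * r 1 * r 3) ^ 2 + (r 0 * r 1 * r 2) ^ 2) := by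
    linear_combination hG / 4
  have h0 := (hr 0).ne'
  have h1 := (hr 1).ne'
  have h2 := (hr 2).ne'
  have h3 := (hr 3).ne'
  field_simp
  linear_combination hq
end

section
/- Margolus–Levitin quantum speed limit (finite-dimensional form, ħ = 1): let H be an n×n Hermitian matrix over ℂ that is positive semidefinite and has 0 as an eigenvalue (i.e., its ground-state energy is 0), let ψ₀ ∈ ℂⁿ be a unit vector, and define ψ(t) = exp(−itH) ψ₀. If τ > 0 satisfies ⟪ψ₀, ψ(τ)⟫ = 0 (the evolved state is orthogonal to the initial state), then τ ≥ π / (2·E), where E = ⟪ψ₀, H ψ₀⟫ is the mean energy (in particular E > 0). -/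
open Matrix
open scoped ComplexOrder

private lemma ml_sin_mono : Monotone (fun x : ℝ => x + Real.sin x) := by
  have h : ∀ x : ℝ, HasDerivAt (fun x : ℝ => x + Real.sin x) (1 + Real.cos x) x := fun x =>
    (hasDerivAt_id x).add (Real.hasDerivAt_sin x)
  apply monotone_of_deriv_nonneg (fun x => (h x).differentiableAt)
  intro x
  rw [(h x).deriv]
  nlinarith [Real.neg_one_le_cos x]

private lemma ml_ineq {x : ℝ} (hx : 0 ≤ x) :
    1 ≤ Real.cos x + 2 / Real.pi * (x + Real.sin x) := by
  have hπ := Real.pi_pos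
  set g : ℝ → ℝ := fun y => Real.cos y + 2 / Real.pi * (y + Real.sin y) with hg
  have hderiv : ∀ y : ℝ, HasDerivAt g (-Real.sin y + 2 / Real.pi * (1 + Real.cos y)) y := by
    intro y
    exact (Real.hasDerivAt_cos y).add (((hasDerivAt_id y).add (Real.hasDerivAt_sin y)).const_mul _)
  have hg0 : g 0 = 1 := by simp [hg]
  have hgπ : g Real.pi = 1 := by
    simp only [hg, Real.cos_pi, Real.sin_pi, add_zero]
    rw [div_mul_eq_mul_div, mul_div_assoc, div_self Real.pi_ne_zero]
    norm_num
  by_cases hxπ : Real.pi ≤ x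
  · have h1 : Real.pi + Real.sin Real.pi ≤ x + Real.sin x := ml_sin_mono hxπ
    rw [Real.sin_pi, add_zero] at h1
    have h2 : (-1 : ℝ) ≤ Real.cos x := Real.neg_one_le_cos x
    have h3 : 2 ≤ 2 / Real.pi * (x + Real.sin x) := by
      rw [div_mul_eq_mul_div, le_div_iff₀ hπ]
      nlinarith
    linarith
  · push_neg at hxπ
    set a := Real.arctan (2 / Real.pi) with ha
    have ha0 : 0 < a := by
      rw [ha, ← Real.arctan_zero]
      exact Real.arctan_strictMono (by positivity)
    have ha2 : a < Real.pi / 2 := Real.arctan_lt_pi_div_two _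
    have htana : Real.tan a = 2 / Real.pi := Real.tan_arctan _
    set x₀ : ℝ := 2 * a with hx₀
    have hx₀π : x₀ < Real.pi := by linarith
    have hfact : ∀ y : ℝ, -Real.sin y + 2 / Real.pi * (1 + Real.cos y)
        = 2 * Real.cos (y / 2) * (2 / Real.pi * Real.cos (y / 2) - Real.sin (y / 2)) := by
      intro y
      have h1 : Real.sin y = 2 * Real.sin (y / 2) * Real.cos (y / 2) := by
        rw [← Real.sin_two_mul]; ring_nf
      have h2 : Real.cos (y / 2) ^ 2 = 1 / 2 + Real.cos y / 2 := by
        have := Real.cos_sq (y / 2)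
        rwa [show 2 * (y / 2) = y by ring] at this
      rw [h1, show (1:ℝ) + Real.cos y = 2 * Real.cos (y / 2) ^ 2 by linarith]
      ring
    have hmono : MonotoneOn g (Set.Icc 0 x₀) := by
      apply monotoneOn_of_deriv_nonneg (convex_Icc _ _)
        (Continuous.continuousOn (by continuity))
        (fun y _ => (hderiv y).differentiableAt.differentiableWithinAt)
      intro y hy
      rw [interior_Icc] at hy
      rw [(hderiv y).deriv, hfact y]
      have h1 : 0 < y / 2 := by linarith [hy.1]
      have h2 : y / 2 < a := by linarith [hy.2]
      have hcos : 0 < Real.cos (y / 2) :=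
        Real.cos_pos_of_mem_Ioo ⟨by linarith [Real.pi_pos], by linarith⟩
      have htan : Real.tan (y / 2) < 2 / Real.pi := by
        rw [← htana]
        exact Real.tan_lt_tan_of_nonneg_of_lt_pi_div_two (le_of_lt h1) ha2 h2
      rw [Real.tan_eq_sin_div_cos, div_lt_iff₀ hcos] at htan
      nlinarith
    have hanti : AntitoneOn g (Set.Icc x₀ Real.pi) := by
      apply antitoneOn_of_deriv_nonpos (convex_Icc _ _)
        (Continuous.continuousOn (by continuity))
        (fun y _ => (hderiv y).differentiableAt.differentiableWithinAt)
      intro y hy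
      rw [interior_Icc] at hy
      rw [(hderiv y).deriv, hfact y]
      have h1 : a < y / 2 := by linarith [hy.1]
      have h2 : y / 2 < Real.pi / 2 := by linarith [hy.2]
      have hcos : 0 ≤ Real.cos (y / 2) :=
        Real.cos_nonneg_of_mem_Icc ⟨by linarith [Real.pi_pos], le_of_lt h2⟩
      have htan : 2 / Real.pi < Real.tan (y / 2) := by
        rw [← htana]
        exact Real.tan_lt_tan_of_nonneg_of_lt_pi_div_two (le_of_lt ha0) h2 h1
      rw [Real.tan_eq_sin_div_cos] at htan
      have hss : 2 / Real.pi * Real.cos (y / 2) ≤ Real.sin (y / 2) := by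
        rcases eq_or_lt_of_le hcos with hc | hc
        · rw [← hc, mul_zero]
          exact Real.sin_nonneg_of_nonneg_of_le_pi (by linarith) (by linarith)
        · rw [lt_div_iff₀ hc] at htan
          linarith
      nlinarith [hcos, hss]
    by_cases hxx : x ≤ x₀
    · have := hmono (Set.mem_Icc.2 ⟨le_refl 0, by linarith [ha0]⟩) (Set.mem_Icc.2 ⟨hx, hxx⟩) hx
      rwa [hg0] at this
    · push_neg at hxx
      have := hanti (Set.mem_Icc.2 ⟨le_of_lt hxx, le_of_lt hxπ⟩)
        (Set.mem_Icc.2 ⟨le_of_lt hx₀π, le_refl _⟩) (le_of_lt hxπ)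
      rwa [hgπ] at this

/-- **Margolus–Levitin quantum speed limit** (finite-dimensional, ħ = 1).
Let `H` be an `n × n` Hermitian, positive-semidefinite complex matrix having
`0` as an eigenvalue (ground-state energy `0`), let `ψ₀ ∈ ℂⁿ` be a unit vector,
and let `ψ t = exp (−itH) ψ₀`.  If `τ > 0` makes `ψ τ` orthogonal to `ψ₀`,
then `τ ≥ π / (2 E)` where `E = ⟪ψ₀, H ψ₀⟫` is the mean energy
(in particular `E > 0`). -/
theorem margolus_levitin_speed_limit (n : ℕ)
    (H : Matrix (Fin n) (Fin n) ℂ)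
    (hHerm : H.IsHermitian) (hPSD : H.PosSemidef)
    (hground : ∃ v : Fin n → ℂ, v ≠ 0 ∧ H.mulVec v = 0)
    (ψ₀ : Fin n → ℂ) (hunit : star ψ₀ ⬝ᵥ ψ₀ = 1)
    (E : ℝ) (hE : star ψ₀ ⬝ᵥ H.mulVec ψ₀ = (E : ℂ))
    (τ : ℝ) (hτ : 0 < τ)
    (horth :
      star ψ₀ ⬝ᵥ (NormedSpace.exp ((-(τ : ℂ) * Complex.I) • H)).mulVec ψ₀ = 0) :
    0 < E ∧ τ ≥ Real.pi / (2 * E) := by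
  classical
  have hπ := Real.pi_pos
  set U : Matrix (Fin n) (Fin n) ℂ := ↑hHerm.eigenvectorUnitary with hUdef
  have hU1 : U * star U = 1 := (Matrix.mem_unitaryGroup_iff).mp hHerm.eigenvectorUnitary.2
  have hU2 : star U * U = 1 := (Matrix.mem_unitaryGroup_iff').mp hHerm.eigenvectorUnitary.2
  set c : Fin n → ℂ := star U *ᵥ ψ₀ with hcdef
  have key : ∀ f : Fin n → ℂ,
      star ψ₀ ⬝ᵥ ((U * diagonal f * star U) *ᵥ ψ₀) = ∑ k, f k * (Complex.normSq (c k) : ℂ) := by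
    intro f
    have hsc : star c = star ψ₀ ᵥ* U := by
      rw [hcdef, Matrix.star_mulVec, Matrix.star_eq_conjTranspose,
        Matrix.conjTranspose_conjTranspose]
    rw [← Matrix.mulVec_mulVec, ← Matrix.mulVec_mulVec, Matrix.dotProduct_mulVec, ← hsc]
    simp only [dotProduct, Matrix.mulVec_diagonal, Pi.star_apply]
    refine Finset.sum_congr rfl fun k _ => ?_
    rw [show (Complex.normSq (c k) : ℂ) = c k * star (c k) from (Complex.mul_conj _).symm]
    ring
  set lam : Fin n → ℝ := hHerm.eigenvalues with hlamdef
  have hlam : ∀ k, 0 ≤ lam k := fun k => hPSD.eigenvalues_nonneg k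
  set p : Fin n → ℝ := fun k => Complex.normSq (c k) with hpdef
  have hp : ∀ k, 0 ≤ p k := fun k => Complex.normSq_nonneg _
  have hspec : H = U * diagonal (fun k => (lam k : ℂ)) * star U := by
    simpa [Function.comp_def] using hHerm.spectral_theorem
  have hUunit : IsUnit U := ⟨⟨U, star U, hU1, hU2⟩, rfl⟩
  have hUinv : U⁻¹ = star U := Matrix.inv_eq_right_inv hU1
  have hexp : NormedSpace.exp ((-(τ : ℂ) * Complex.I) • H)
      = U * diagonal (fun k => Complex.exp (-(τ : ℂ) * Complex.I * (lam k : ℂ)))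
        * star U := by
    have h1 : (-(τ : ℂ) * Complex.I) • H
        = U * diagonal (fun k => -(τ : ℂ) * Complex.I * (lam k : ℂ)) * U⁻¹ := by
      rw [hUinv]
      conv_lhs => rw [hspec]
      rw [← smul_mul_assoc, ← mul_smul_comm, ← Matrix.diagonal_smul]
      congr 2
    rw [h1, Matrix.exp_conj U _ hUunit, Matrix.exp_diagonal, hUinv]
    congr 1
    congr 1
    rw [Pi.exp_def]
    funext k
    rw [← Complex.exp_eq_exp_ℂ]
  -- ∑ p = 1
  have hpsum : ∑ k, p k = 1 := by
    have h := key (fun _ => 1)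
    rw [show U * diagonal (fun _ => (1:ℂ)) * star U = 1 by
      rw [Matrix.diagonal_one, mul_one, hU1], Matrix.one_mulVec, hunit] at h
    have h2 := congrArg Complex.re h.symm
    simpa [Complex.re_sum] using h2
  -- ∑ lam k * p k = E
  have hEsum : ∑ k, lam k * p k = E := by
    have h := key (fun k => (lam k : ℂ))
    rw [← hspec] at h
    rw [hE] at h
    have h2 := congrArg Complex.re h.symm
    simpa [Complex.re_sum] using h2
  -- orthogonality in eigenbasis
  have horth' : ∑ k, Complex.exp (-(τ : ℂ) * Complex.I * (lam k : ℂ)) * (p k : ℂ) = 0 := by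
    have h := key (fun k => Complex.exp (-(τ : ℂ) * Complex.I * (lam k : ℂ)))
    rw [← hexp] at h
    rw [horth] at h
    exact h.symm
  -- term rewriting: exp(-τ i λ) = exp(↑(-(τλ)) * I)
  have hterm : ∀ k, Complex.exp (-(τ : ℂ) * Complex.I * (lam k : ℂ))
      = Complex.exp (((-(τ * lam k) : ℝ) : ℂ) * Complex.I) := by
    intro k
    congr 1
    push_cast
    ring
  have hre : ∑ k, Real.cos (τ * lam k) * p k = 0 := by
    have h := congrArg Complex.re horth'
    simp only [Complex.re_sum, hterm, Complex.zero_re] at h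
    calc ∑ k, Real.cos (τ * lam k) * p k
        = ∑ k, (Complex.exp (((-(τ * lam k) : ℝ) : ℂ) * Complex.I) * (p k : ℂ)).re := by
          refine Finset.sum_congr rfl fun k _ => ?_
          rw [Complex.mul_re, Complex.exp_ofReal_mul_I_re, Complex.ofReal_re,
            Complex.ofReal_im, mul_zero, sub_zero, Real.cos_neg]
      _ = 0 := h
  have him : ∑ k, Real.sin (τ * lam k) * p k = 0 := by
    have h := congrArg Complex.im horth'
    simp only [Complex.im_sum, hterm, Complex.zero_im] at h
    have h2 : ∑ k, -(Real.sin (τ * lam k) * p k) = 0 := by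
      calc ∑ k, -(Real.sin (τ * lam k) * p k)
          = ∑ k, (Complex.exp (((-(τ * lam k) : ℝ) : ℂ) * Complex.I) * (p k : ℂ)).im := by
            refine Finset.sum_congr rfl fun k _ => ?_
            rw [Complex.mul_im, Complex.exp_ofReal_mul_I_im, Complex.ofReal_re,
              Complex.ofReal_im, mul_zero, zero_add, Real.sin_neg]
            ring
        _ = 0 := h
    rw [Finset.sum_neg_distrib] at h2
    linarith
  -- summed Margolus–Levitin inequality
  have hML : ∀ k ∈ Finset.univ, p k ≤ Real.cos (τ * lam k) * p k
      + 2 / Real.pi * ((τ * lam k) * p k + Real.sin (τ * lam k) * p k) := by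
    intro k _
    have h := ml_ineq (mul_nonneg hτ.le (hlam k))
    nlinarith [hp k]
  have hsum := Finset.sum_le_sum hML
  rw [hpsum] at hsum
  have hrhs : ∑ k, (Real.cos (τ * lam k) * p k
      + 2 / Real.pi * ((τ * lam k) * p k + Real.sin (τ * lam k) * p k))
      = 2 / Real.pi * (τ * E) := by
    rw [Finset.sum_add_distrib, hre, zero_add, ← Finset.mul_sum, Finset.sum_add_distrib, him,
      add_zero]
    congr 1
    rw [← hEsum, Finset.mul_sum]
    refine Finset.sum_congr rfl fun k _ => ?_
    ring
  rw [hrhs] at hsum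
  -- hsum : 1 ≤ 2/π * (τ * E)
  have hE0 : 0 < E := by
    by_contra h
    push_neg at h
    have h2 : 0 ≤ 2 / Real.pi := by positivity
    have h3 : τ * E ≤ 0 := by nlinarith
    nlinarith [mul_nonneg h2 (neg_nonneg.2 h3)]
  refine ⟨hE0, ?_⟩
  rw [ge_iff_le, div_le_iff₀ (by positivity)]
  have hid : Real.pi * (2 / Real.pi * (τ * E)) = 2 * (τ * E) := by
    field_simp
  nlinarith [mul_le_mul_of_nonneg_left hsum hπ.le]
end

section
/- Mandelstam–Tamm quantum speed limit for orthogonalization (finite-dimensional form, ħ = 1): let H be an n×n Hermitian matrix over ℂ, let ψ₀ ∈ ℂⁿ be a unit vector, and define ψ(t) = exp(−itH) ψ₀. If τ > 0 satisfies ⟪ψ₀, ψ(τ)⟫ = 0, then τ · ΔE ≥ π/2, where ΔE = √(⟪ψ₀, H² ψ₀⟫ − ⟪ψ₀, H ψ₀⟫²) is the energy uncertainty of the initial state (in particular ΔE > 0). -/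
open Matrix

lemma mt_key_ineq (x : ℝ) : Real.pi^2/4 ≤ x^2 + Real.pi * Real.cos x := by
  wlog hx : 0 ≤ x with hw
  · have := hw (-x) (by linarith)
    simpa using this
  have hpi1 : (3.141592 : ℝ) < Real.pi := Real.pi_gt_d6
  have hpi2 : Real.pi < 3.1416 := Real.pi_lt_d6.trans (by norm_num)
  rcases le_or_gt Real.pi x with h1 | h1
  · nlinarith [Real.neg_one_le_cos x]
  rcases le_or_gt (Real.pi/2) x with h2 | h2
  · have hs : Real.sin (x - Real.pi/2) ≤ x - Real.pi/2 := Real.sin_le (by linarith)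
    have hc : Real.sin (x - Real.pi/2) = - Real.cos x := by
      rw [Real.sin_sub]; simp
    nlinarith
  rcases le_or_gt (Real.pi/2 - 1) x with h3 | h3
  · have hy0 : 0 < Real.pi/2 - x := by linarith
    have hy1 : Real.pi/2 - x ≤ 1 := by linarith
    have hcube := Real.sin_gt_sub_cube hy0
    have hc : Real.sin (Real.pi/2 - x) = Real.cos x := Real.sin_pi_div_two_sub x
    have h4 : (0:ℝ) ≤ (Real.pi/2 - x)^2 * (4 - Real.pi*(Real.pi/2 - x)) :=
      mul_nonneg (sq_nonneg _) (by nlinarith)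
    nlinarith
  · have := Real.one_sub_sq_div_two_le_cos (x := x)
    nlinarith

/-- **Mandelstam–Tamm quantum speed limit** (finite-dimensional, ħ = 1).
Let `H` be an `n × n` Hermitian complex matrix, `ψ₀ ∈ ℂⁿ` a unit vector, and
`ψ t = exp (−itH) ψ₀`.  If `τ > 0` makes `ψ τ` orthogonal to `ψ₀`, then
`τ · ΔE ≥ π / 2`, where `ΔE = √(⟪ψ₀, H² ψ₀⟫ − ⟪ψ₀, H ψ₀⟫²)` is the energy
uncertainty of the initial state (in particular `ΔE > 0`). -/
theorem mandelstam_tamm_speed_limit (n : ℕ)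
    (H : Matrix (Fin n) (Fin n) ℂ)
    (hHerm : H.IsHermitian)
    (ψ₀ : Fin n → ℂ) (hunit : star ψ₀ ⬝ᵥ ψ₀ = 1)
    (E : ℝ) (hE : star ψ₀ ⬝ᵥ H.mulVec ψ₀ = (E : ℂ))
    (E₂ : ℝ) (hE₂ : star ψ₀ ⬝ᵥ (H * H).mulVec ψ₀ = (E₂ : ℂ))
    (τ : ℝ) (hτ : 0 < τ)
    (horth :
      star ψ₀ ⬝ᵥ (NormedSpace.exp ((-(τ : ℂ) * Complex.I) • H)).mulVec ψ₀ = 0) :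
    0 < Real.sqrt (E₂ - E ^ 2) ∧
      τ * Real.sqrt (E₂ - E ^ 2) ≥ Real.pi / 2 := by
  classical
  set U : Matrix (Fin n) (Fin n) ℂ := (hHerm.eigenvectorUnitary : Matrix (Fin n) (Fin n) ℂ) with hUdef
  set μ : Fin n → ℝ := hHerm.eigenvalues with hμdef
  have hU1 : U * star U = 1 := (Matrix.mem_unitaryGroup_iff).mp (hHerm.eigenvectorUnitary).2
  have hU2 : star U * U = 1 := (Matrix.mem_unitaryGroup_iff').mp (hHerm.eigenvectorUnitary).2
  set c : Fin n → ℂ := (star U).mulVec ψ₀ with hcdef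
  set p : Fin n → ℝ := fun k => Complex.normSq (c k) with hpdef
  -- general conjugation identity
  have conj_apply : ∀ f : Fin n → ℂ,
      star ψ₀ ⬝ᵥ (U * diagonal f * star U).mulVec ψ₀ = ∑ k, f k * (p k : ℂ) := by
    intro f
    have hstarc : star c = star ψ₀ ᵥ* U := by
      rw [hcdef, star_mulVec, Matrix.star_eq_conjTranspose, conjTranspose_conjTranspose]
    calc star ψ₀ ⬝ᵥ (U * diagonal f * star U).mulVec ψ₀
        = star ψ₀ ⬝ᵥ (U.mulVec ((diagonal f).mulVec c)) := by
          rw [hcdef, mulVec_mulVec, mulVec_mulVec, mul_assoc]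
      _ = (star ψ₀ ᵥ* U) ⬝ᵥ ((diagonal f).mulVec c) := by
          rw [dotProduct_mulVec]
      _ = ∑ k, f k * (p k : ℂ) := by
          rw [← hstarc]
          simp only [dotProduct, mulVec_diagonal, hpdef, Pi.star_apply, RCLike.star_def]
          refine Finset.sum_congr rfl fun k _ => ?_
          rw [mul_left_comm, ← Complex.normSq_eq_conj_mul_self]
  have hspec : H = U * diagonal (fun k => (μ k : ℂ)) * star U := by
    have := hHerm.spectral_theorem
    rw [Unitary.conjStarAlgAut_apply] at this
    exact this
  -- sum of p is 1
  have h1 : ∑ k, (p k : ℂ) = 1 := by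
    have := conj_apply (fun _ => 1)
    simp only [diagonal_one, mul_one, one_mul, one_mulVec] at this
    rw [hU1, one_mulVec, hunit] at this
    simpa using this.symm
  have h2 : ∑ k, (μ k : ℂ) * (p k : ℂ) = (E : ℂ) := by
    rw [← conj_apply, ← hspec, hE]
  have hHH : H * H = U * diagonal (fun k => ((μ k : ℂ))^2) * star U := by
    rw [hspec]
    have : (U * diagonal (fun k => (μ k : ℂ)) * star U) * (U * diagonal (fun k => (μ k : ℂ)) * star U)
        = U * (diagonal (fun k => (μ k : ℂ)) * (star U * U) * diagonal (fun k => (μ k : ℂ))) * star U := by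
      noncomm_ring
    rw [this, hU2, mul_one, diagonal_mul_diagonal]
    congr 1
    congr 1
    funext k
    ring
  have h3 : ∑ k, ((μ k : ℂ))^2 * (p k : ℂ) = (E₂ : ℂ) := by
    rw [← conj_apply, ← hHH, hE₂]
  -- exponential
  have hexp : NormedSpace.exp ((-(τ : ℂ) * Complex.I) • H)
      = U * diagonal (fun k => Complex.exp ((-(τ : ℂ) * Complex.I) * (μ k : ℂ))) * star U := by
    set Uu : (Matrix (Fin n) (Fin n) ℂ)ˣ := ⟨U, star U, hU1, hU2⟩ with hUu
    have hsm : (-(τ : ℂ) * Complex.I) • H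
        = (Uu : Matrix (Fin n) (Fin n) ℂ) * ((-(τ : ℂ) * Complex.I) • diagonal (fun k => (μ k : ℂ)))
          * ((Uu⁻¹ : (Matrix (Fin n) (Fin n) ℂ)ˣ) : Matrix (Fin n) (Fin n) ℂ) := by
      show _ = U * _ * star U
      rw [hspec]
      rw [mul_smul_comm, smul_mul_assoc]
    rw [hsm, Matrix.exp_units_conj]
    show _ = U * _ * star U
    congr 1
    congr 1
    rw [← diagonal_smul, Matrix.exp_diagonal]
    congr 1
    funext k
    rw [Pi.exp_def]
    simp only [Pi.smul_apply, smul_eq_mul]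
    rw [← Complex.exp_eq_exp_ℂ]
  have h4 : ∑ k, Complex.exp ((-(τ : ℂ) * Complex.I) * (μ k : ℂ)) * (p k : ℂ) = 0 := by
    rw [← conj_apply, ← hexp, horth]
  -- real versions
  have hp1 : ∑ k, p k = 1 := by
    exact_mod_cast (by push_cast at h1 ⊢; exact h1 : ((∑ k, p k : ℝ) : ℂ) = ((1:ℝ) : ℂ))
  have hp2 : ∑ k, μ k * p k = E := by
    have : ((∑ k, μ k * p k : ℝ) : ℂ) = ((E : ℝ) : ℂ) := by push_cast; exact h2
    exact_mod_cast this
  have hp3 : ∑ k, (μ k)^2 * p k = E₂ := by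
    have : ((∑ k, (μ k)^2 * p k : ℝ) : ℂ) = ((E₂ : ℝ) : ℂ) := by push_cast; exact h3
    exact_mod_cast this
  have hp4 : ∑ k, Real.cos (τ * (μ k - E)) * p k = 0 := by
    have hrot : ∑ k, Complex.exp ((↑(τ * (E - μ k)) : ℂ) * Complex.I) * (p k : ℂ) = 0 := by
      have := congrArg (fun z => Complex.exp ((τ : ℂ) * (E : ℂ) * Complex.I) * z) h4
      simp only [mul_zero, Finset.mul_sum] at this
      rw [← this]
      refine Finset.sum_congr rfl fun k _ => ?_
      rw [← mul_assoc, ← Complex.exp_add]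
      congr 2
      push_cast
      ring
    have := congrArg Complex.re hrot
    rw [Complex.re_sum] at this
    simp only [Complex.zero_re] at this
    rw [← this]
    refine Finset.sum_congr rfl fun k _ => ?_
    rw [Complex.exp_mul_I]
    simp only [Complex.add_re, Complex.mul_re, Complex.ofReal_re, Complex.ofReal_im,
      Complex.cos_ofReal_re, Complex.cos_ofReal_im, Complex.sin_ofReal_re, Complex.sin_ofReal_im,
      Complex.I_re, Complex.I_im]
    rw [← Real.cos_neg]
    ring_nf
  -- summation of the key inequality
  have hpnn : ∀ k, 0 ≤ p k := fun k => Complex.normSq_nonneg _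
  have hmain : Real.pi^2/4 ≤ τ^2 * (E₂ - E^2) := by
    have hsum : ∑ k, (Real.pi^2/4) * p k ≤
        ∑ k, ((τ * (μ k - E))^2 + Real.pi * Real.cos (τ * (μ k - E))) * p k := by
      refine Finset.sum_le_sum fun k _ => ?_
      exact mul_le_mul_of_nonneg_right (mt_key_ineq (τ * (μ k - E))) (hpnn k)
    have hL : ∑ k, (Real.pi^2/4) * p k = Real.pi^2/4 := by
      rw [← Finset.mul_sum, hp1, mul_one]
    have hR : ∑ k, ((τ * (μ k - E))^2 + Real.pi * Real.cos (τ * (μ k - E))) * p k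
        = τ^2 * (E₂ - E^2) := by
      have hterm : ∀ k, ((τ * (μ k - E))^2 + Real.pi * Real.cos (τ * (μ k - E))) * p k
          = τ^2 * ((μ k)^2 * p k) - 2*τ^2*E * (μ k * p k) + τ^2*E^2 * p k
            + Real.pi * (Real.cos (τ * (μ k - E)) * p k) := by
        intro k; ring
      rw [Finset.sum_congr rfl fun k _ => hterm k]
      rw [Finset.sum_add_distrib, Finset.sum_add_distrib, Finset.sum_sub_distrib,
        ← Finset.mul_sum, ← Finset.mul_sum, ← Finset.mul_sum, ← Finset.mul_sum,
        hp1, hp2, hp3, hp4]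
      ring
    rw [hL, hR] at hsum
    exact hsum
  have hV : 0 < E₂ - E^2 := by
    nlinarith [mul_pos Real.pi_pos Real.pi_pos, sq_nonneg τ, mul_pos hτ hτ]
  refine ⟨Real.sqrt_pos.mpr hV, ?_⟩
  have heq : τ * Real.sqrt (E₂ - E^2) = Real.sqrt (τ^2 * (E₂ - E^2)) := by
    rw [Real.sqrt_mul (sq_nonneg τ), Real.sqrt_sq hτ.le]
  have hhalf : Real.pi / 2 = Real.sqrt (Real.pi^2/4) := by
    rw [show Real.pi^2/4 = (Real.pi/2)^2 by ring, Real.sqrt_sq (by positivity)]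
  rw [ge_iff_le, heq, hhalf]
  exact Real.sqrt_le_sqrt hmain
end
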